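/- arXiv:2006.09126 — 4 statements merged into one kernel-verified Lean document; each statement's English description precedes it below -/
import Mathlib

section
/- Let n ≥ 1 and let x ∈ {0,1}^n be a fixed search point with z := |x|₀ ≥ 1 zero-bits and o := |x|₁ ≥ 1 one-bits. Let r₀, r₁ ≥ 0 with r₀ + r₁ = 1 and let 0 ≤ β ≤ r₁. Then for the fitness function OneMax, P[S_{((r₀+β)/z, (r₁−β)/o)}] ≥ P[S_{(r₀/z, r₁/o)}] + r₁·r₀·(1 − e^{−β}). -/
open MeasureTheory

/-- The (possibly sub-)probability measure on `Bool` putting mass `p` on `true`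
and mass `1 - p` on `false` (a Bernoulli distribution for `p ∈ [0,1]`). -/
noncomputable def bern (p : ℝ) : Measure Bool :=
  ENNReal.ofReal p • Measure.dirac true + ENNReal.ofReal (1 - p) • Measure.dirac false

/-- Asymmetric mutation: from `x`, flip each zero-bit independently with probability `p₀`
and each one-bit independently with probability `p₁`; this is the distribution of the
offspring `y`. -/
noncomputable def mutation {n : ℕ} (x : Fin n → Bool) (p₀ p₁ : ℝ) :
    Measure (Fin n → Bool) :=
  (Measure.pi fun i => bern (if x i then p₁ else p₀)).map fun flip i => xor (flip i) (x i)

/-- The number of one-bits of `x`; `OneMax(x) = ones x`. -/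
def ones {n : ℕ} (x : Fin n → Bool) : ℕ := (Finset.univ.filter fun i => x i = true).card

/-- The number of zero-bits of `x`. -/
def zeros {n : ℕ} (x : Fin n → Bool) : ℕ := (Finset.univ.filter fun i => x i = false).card

/-- `P[S_{(p₀,p₁)}]`: probability that asymmetric mutation with pair `(p₀,p₁)` produces a
strict improvement of OneMax from `x`. -/
noncomputable def improveProb {n : ℕ} (x : Fin n → Bool) (p₀ p₁ : ℝ) : ℝ :=
  ((mutation x p₀ p₁) {y | ones x < ones y}).toReal

/-!
An offspring improves OneMax exactly when more zero-bits than one-bits flip, so the success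
probability is `𝔼[P(A > B)]` for independent `A ~ Bin(z, p₀)` and `B ~ Bin(o, p₁)`. Since
`P(A > b)` increases with `p₀` and decreases with `b`, raising `p₀` to `p₀'` and lowering `p₁`
to `p₁'` can only help, and the gain is at least the contribution of the event `B = 0`, namely
`(1 - p₁')^o ((1 - p₀)^z - (1 - p₀')^z)`. Bernoulli's inequality bounds the first factor below
by `r₀ + β ≥ r₀`; the second is at least `(1 - r₀/z)^z (1 - e^{-β}) ≥ r₁ (1 - e^{-β})`, because
`1 - (r₀ + β)/z ≤ (1 - r₀/z) e^{-β/z}`.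
-/

open Finset Real

lemma one_sub_le_one_sub_div_pow {m : ℕ} (hm : m ≠ 0) {t : ℝ} (ht : t ≤ 2 * m) :
    1 - t ≤ (1 - t / m) ^ m := by
  have hm' : (0 : ℝ) < m := by positivity
  have h := one_add_mul_le_pow (a := -(t / m)) (by rw [neg_le_neg_iff, div_le_iff₀ hm']; linarith) m
  rwa [mul_neg, mul_div_cancel₀ _ hm'.ne', ← sub_eq_add_neg, ← sub_eq_add_neg] at h

lemma one_sub_add_div_pow_le {m : ℕ} (hm : m ≠ 0) {a β : ℝ} (ha : 0 ≤ a) (hβ : 0 ≤ β)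
    (hle : a + β ≤ m) : (1 - (a + β) / m) ^ m ≤ (1 - a / m) ^ m * exp (-β) := by
  have hm' : (0 : ℝ) < m := by positivity
  have hb : 0 ≤ 1 - (a + β) / m := by rw [sub_nonneg, div_le_one hm']; exact hle
  have hstep : 1 - (a + β) / m ≤ (1 - a / m) * exp (-(β / m)) := calc
    1 - (a + β) / m ≤ (1 - a / m) * (1 - β / m) := by
      rw [add_div]; nlinarith [div_nonneg ha hm'.le, div_nonneg hβ hm'.le]
    _ ≤ (1 - a / m) * exp (-(β / m)) := by
      gcongr
      · rw [add_div] at hb; linarith [div_nonneg hβ hm'.le]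
      · linarith [add_one_le_exp (-(β / m))]
  calc (1 - (a + β) / m) ^ m ≤ ((1 - a / m) * exp (-(β / m))) ^ m := by gcongr
    _ = (1 - a / m) ^ m * exp (-β) := by
      rw [mul_pow, ← exp_nat_mul, mul_neg, mul_div_cancel₀ _ hm'.ne']

lemma mul_mul_one_sub_exp_neg_le {z o : ℕ} (hz : z ≠ 0) (ho : o ≠ 0) {r₀ r₁ β : ℝ}
    (hr₀ : 0 ≤ r₀) (hr₁ : 0 ≤ r₁) (hsum : r₀ + r₁ = 1) (hβ₀ : 0 ≤ β) (hβ : β ≤ r₁) :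
    r₁ * r₀ * (1 - exp (-β))
      ≤ (1 - (r₁ - β) / o) ^ o * ((1 - r₀ / z) ^ z - (1 - (r₀ + β) / z) ^ z) := by
  have hz1 : (1 : ℝ) ≤ z := by exact_mod_cast Nat.one_le_iff_ne_zero.2 hz
  have ho1 : (1 : ℝ) ≤ o := by exact_mod_cast Nat.one_le_iff_ne_zero.2 ho
  have hone : r₀ + β ≤ (1 - (r₁ - β) / o) ^ o := by
    have := one_sub_le_one_sub_div_pow ho (t := r₁ - β) (by linarith); linarith
  have hzero : r₁ ≤ (1 - r₀ / z) ^ z := by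
    have := one_sub_le_one_sub_div_pow hz (t := r₀) (by linarith); linarith
  have hexp : 0 ≤ 1 - exp (-β) := by simp [hβ₀]
  have hgap : r₁ * (1 - exp (-β)) ≤ (1 - r₀ / z) ^ z - (1 - (r₀ + β) / z) ^ z := by
    have := one_sub_add_div_pow_le hz hr₀ hβ₀ (by linarith)
    nlinarith
  calc r₁ * r₀ * (1 - exp (-β)) = r₀ * (r₁ * (1 - exp (-β))) := by ring
    _ ≤ _ := mul_le_mul (by linarith) hgap (by positivity) (by linarith)

def bernoulliWeight (p : ℝ) (b : Bool) : ℝ := if b then p else 1 - p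

lemma bernoulliWeight_nonneg {p : ℝ} (h0 : 0 ≤ p) (h1 : p ≤ 1) (b : Bool) :
    0 ≤ bernoulliWeight p b := by
  cases b <;> simp [bernoulliWeight] <;> linarith

lemma sum_prod_bernoulliWeight (ι : Type*) [Fintype ι] [DecidableEq ι] (p : ℝ) :
    ∑ g : ι → Bool, ∏ i, bernoulliWeight p (g i) = 1 := by
  rw [← Fintype.prod_sum fun _ b => bernoulliWeight p b]
  simp [bernoulliWeight]

noncomputable def binomialExpectation (ι : Type*) [Fintype ι] [DecidableEq ι] (p : ℝ)
    (φ : ℕ → ℝ) : ℝ :=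
  ∑ g : ι → Bool, (∏ i, bernoulliWeight p (g i)) * φ #{i | g i}

section
variable {ι κ : Type*} [Fintype ι] [DecidableEq ι] [Fintype κ] [DecidableEq κ]
  {p q : ℝ} {φ ψ : ℕ → ℝ}

lemma binomialExpectation_congr (e : ι ≃ κ) (p : ℝ) (φ : ℕ → ℝ) :
    binomialExpectation ι p φ = binomialExpectation κ p φ := by
  refine Fintype.sum_equiv (e.arrowCongr (Equiv.refl Bool)) _ _ fun g => ?_
  rw [card_filter, card_filter]
  exact congrArg₂ (· * φ ·) (Fintype.prod_equiv e _ _ fun i => by simp)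
    (Fintype.sum_equiv e _ _ fun i => by simp)

lemma card_filter_fin_cons {m : ℕ} (b : Bool) (g : Fin m → Bool) :
    #{i | (Fin.cons b g : Fin (m + 1) → Bool) i} = #{i | g i} + b.toNat := by
  rw [card_filter, card_filter, Fin.sum_univ_succ]
  cases b <;> simp [add_comm]

lemma binomialExpectation_fin_succ (m : ℕ) (p : ℝ) (φ : ℕ → ℝ) :
    binomialExpectation (Fin (m + 1)) p φ = (1 - p) * binomialExpectation (Fin m) p φ +
      p * binomialExpectation (Fin m) p fun k => φ (k + 1) := by
  rw [binomialExpectation, ← (Fin.consEquiv fun _ => Bool).sum_comp, Fintype.sum_prod_type,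
    Fintype.sum_bool, add_comm, binomialExpectation, binomialExpectation, mul_sum, mul_sum]
  simp only [Fin.consEquiv_apply, Fin.prod_univ_succ, Fin.cons_zero, Fin.cons_succ,
    card_filter_fin_cons, bernoulliWeight]
  congr 1 <;> refine sum_congr rfl fun g _ => ?_ <;> simp <;> ring

lemma binomialExpectation_mono (h0 : 0 ≤ p) (h1 : p ≤ 1) (h : φ ≤ ψ) :
    binomialExpectation ι p φ ≤ binomialExpectation ι p ψ :=
  sum_le_sum fun _ _ => mul_le_mul_of_nonneg_left (h _)
    (prod_nonneg fun _ _ => bernoulliWeight_nonneg h0 h1 _)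

lemma binomialExpectation_neg (p : ℝ) (φ : ℕ → ℝ) :
    (binomialExpectation ι p fun k => -φ k) = -binomialExpectation ι p φ := by
  simp [binomialExpectation]

lemma binomialExpectation_sub (p : ℝ) (φ ψ : ℕ → ℝ) :
    binomialExpectation ι p (φ - ψ) = binomialExpectation ι p φ - binomialExpectation ι p ψ := by
  simp [binomialExpectation, mul_sub]

lemma pow_mul_le_binomialExpectation (h0 : 0 ≤ p) (h1 : p ≤ 1) (hφ : 0 ≤ φ) :
    (1 - p) ^ Fintype.card ι * φ 0 ≤ binomialExpectation ι p φ := by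
  have hterm (g : ι → Bool) : 0 ≤ (∏ i, bernoulliWeight p (g i)) * φ #{i | g i} :=
    mul_nonneg (prod_nonneg fun i _ => bernoulliWeight_nonneg h0 h1 (g i)) (hφ _)
  simpa [binomialExpectation, bernoulliWeight] using
    single_le_sum (fun g _ => hterm g) (mem_univ fun _ : ι => false)

lemma binomialExpectation_le_of_monotone (h0 : 0 ≤ p) (hpq : p ≤ q) (h1 : q ≤ 1)
    (hφ : Monotone φ) : binomialExpectation ι p φ ≤ binomialExpectation ι q φ := by
  simp only [binomialExpectation_congr (Fintype.equivFin ι)]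
  induction Fintype.card ι generalizing φ with
  | zero => simp [binomialExpectation]
  | succ m ih =>
    have hshift : Monotone fun k => φ (k + 1) := fun a b hab => hφ (by omega)
    have hstep :
        binomialExpectation (Fin m) q φ ≤ binomialExpectation (Fin m) q fun k => φ (k + 1) :=
      binomialExpectation_mono (h0.trans hpq) h1 fun k => hφ k.le_succ
    rw [binomialExpectation_fin_succ, binomialExpectation_fin_succ]
    nlinarith [ih hφ, ih hshift]

lemma binomialExpectation_le_of_antitone (h0 : 0 ≤ p) (hpq : p ≤ q) (h1 : q ≤ 1)
    (hφ : Antitone φ) : binomialExpectation ι q φ ≤ binomialExpectation ι p φ := by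
  have := binomialExpectation_le_of_monotone (ι := ι) h0 hpq h1 hφ.neg
  rw [binomialExpectation_neg, binomialExpectation_neg] at this
  exact neg_le_neg_iff.1 this

noncomputable def binomialTail (ι : Type*) [Fintype ι] [DecidableEq ι] (p : ℝ) (b : ℕ) : ℝ :=
  binomialExpectation ι p fun a => if b < a then 1 else 0

lemma binomialTail_zero (p : ℝ) : binomialTail ι p 0 = 1 - (1 - p) ^ Fintype.card ι := by
  have htotal := sum_prod_bernoulliWeight ι p
  rw [Fintype.sum_eq_add_sum_compl (fun _ => false)] at htotal
  rw [binomialTail, binomialExpectation, Fintype.sum_eq_add_sum_compl (fun _ => false)]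
  have hpos : ∀ g ∈ ({fun _ => false} : Finset (ι → Bool))ᶜ, 0 < #{i | g i} := fun g hg => by
    obtain ⟨i, hi⟩ : ∃ i, g i ≠ false := by
      by_contra! h
      exact mem_compl.1 hg (mem_singleton.2 (funext h))
    exact card_pos.2 ⟨i, by simpa using hi⟩
  rw [sum_congr rfl fun g hg => by rw [if_pos (hpos g hg), mul_one]]
  simp [bernoulliWeight] at htotal ⊢
  linarith

lemma binomialTail_antitone (h0 : 0 ≤ p) (h1 : p ≤ 1) : Antitone (binomialTail ι p) :=
  fun b b' hb => binomialExpectation_mono h0 h1 fun a => by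
    split_ifs <;> first | omega | norm_num

lemma binomialTail_le_binomialTail (h0 : 0 ≤ p) (hpq : p ≤ q) (h1 : q ≤ 1) (b : ℕ) :
    binomialTail ι p b ≤ binomialTail ι q b :=
  binomialExpectation_le_of_monotone h0 hpq h1 fun a a' ha => by
    split_ifs <;> first | omega | norm_num

lemma binomialExpectation_binomialTail_add_le {p₀ p₀' p₁ p₁' : ℝ} (hp₀ : 0 ≤ p₀) (hp₀' : p₀ ≤ p₀')
    (hp₀'1 : p₀' ≤ 1) (hp₁' : 0 ≤ p₁') (hp₁ : p₁' ≤ p₁) (hp₁1 : p₁ ≤ 1) :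
    binomialExpectation κ p₁ (binomialTail ι p₀) +
        (1 - p₁') ^ Fintype.card κ * ((1 - p₀) ^ Fintype.card ι - (1 - p₀') ^ Fintype.card ι)
      ≤ binomialExpectation κ p₁' (binomialTail ι p₀') := by
  have hle : binomialTail ι p₀ ≤ binomialTail ι p₀' :=
    binomialTail_le_binomialTail hp₀ hp₀' hp₀'1
  calc _ ≤ binomialExpectation κ p₁' (binomialTail ι p₀) +
        (1 - p₁') ^ Fintype.card κ * (binomialTail ι p₀' - binomialTail ι p₀) 0 := by
          rw [Pi.sub_apply, binomialTail_zero, binomialTail_zero, sub_sub_sub_cancel_left]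
          gcongr
          exact binomialExpectation_le_of_antitone hp₁' hp₁ hp₁1
            (binomialTail_antitone hp₀ (hp₀'.trans hp₀'1))
    _ ≤ binomialExpectation κ p₁' (binomialTail ι p₀) +
        binomialExpectation κ p₁' (binomialTail ι p₀' - binomialTail ι p₀) := by
          gcongr
          exact pow_mul_le_binomialExpectation hp₁' (hp₁.trans hp₁1) (sub_nonneg.2 hle)
    _ = binomialExpectation κ p₁' (binomialTail ι p₀') := by
          rw [binomialExpectation_sub]; ring
end

lemma measureReal_pi_eq_sum {ι : Type*} [Fintype ι] [DecidableEq ι] {α : ι → Type*}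
    [∀ i, Fintype (α i)] [∀ i, MeasurableSpace (α i)] [∀ i, MeasurableSingletonClass (α i)]
    (μ : ∀ i, Measure (α i)) [∀ i, IsFiniteMeasure (μ i)] (s : Set (∀ i, α i))
    [DecidablePred (· ∈ s)] :
    (Measure.pi μ).real s = ∑ f with f ∈ s, ∏ i, (μ i).real {f i} := by
  conv_lhs => rw [show s = ↑({f | f ∈ s} : Finset (∀ i, α i)) by ext; simp]
  rw [← sum_measureReal_singleton]
  simp [measureReal_def, ENNReal.toReal_prod]

instance (p : ℝ) : IsFiniteMeasure (bern p) := by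
  constructor
  simp [bern]

lemma bern_real_singleton {p : ℝ} (h0 : 0 ≤ p) (h1 : p ≤ 1) (b : Bool) :
    (bern p).real {b} = bernoulliWeight p b := by
  cases b <;> simp [bern, bernoulliWeight, measureReal_def, h0, h1]

lemma ones_xor_add {n : ℕ} (x f : Fin n → Bool) :
    ones (fun i => xor (f i) (x i)) + #{i | x i ∧ f i} = ones x + #{i | ¬ x i ∧ f i} := by
  simp only [ones, card_filter, ← sum_add_distrib]
  exact sum_congr rfl fun i _ => by cases x i <;> cases f i <;> rfl

lemma card_filter_subtype {ι : Type*} [Fintype ι] (P Q : ι → Prop) [DecidablePred P]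
    [DecidablePred Q] : #{j : {i // P i} | Q j} = #{i | P i ∧ Q i} := by
  simp only [← Fintype.card_subtype]
  exact Fintype.card_congr (Equiv.subtypeSubtypeEquivSubtypeInter P Q)

lemma sum_prod_bernoulliWeight_split {ι : Type*} [Fintype ι] [DecidableEq ι] (P : ι → Prop)
    [DecidablePred P] (p₀ p₁ : ℝ) (Ψ : ℕ → ℕ → ℝ) :
    ∑ f : ι → Bool, (∏ i, bernoulliWeight (if P i then p₁ else p₀) (f i)) *
        Ψ #{i | P i ∧ f i} #{i | ¬ P i ∧ f i} =
      binomialExpectation {i // P i} p₁ fun b => binomialExpectation {i // ¬ P i} p₀ (Ψ b) := by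
  rw [← (Equiv.piEquivPiSubtypeProd P fun _ => Bool).symm.sum_comp, Fintype.sum_prod_type]
  simp only [binomialExpectation, mul_sum]
  refine sum_congr rfl fun h _ => sum_congr rfl fun g _ => ?_
  rw [← Fintype.prod_subtype_mul_prod_subtype P]
  have hP (i : {i // P i}) : P i := i.2
  have hnP (i : {i // ¬ P i}) : ¬ P i := i.2
  simp [← card_filter_subtype, Equiv.piEquivPiSubtypeProd_symm_apply, hP, hnP, mul_assoc]

lemma improveProb_eq {n : ℕ} (x : Fin n → Bool) {p₀ p₁ : ℝ}
    (h00 : 0 ≤ p₀) (h01 : p₀ ≤ 1) (h10 : 0 ≤ p₁) (h11 : p₁ ≤ 1) :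
    improveProb x p₀ p₁ =
      binomialExpectation {i // x i} p₁ (binomialTail {i // ¬ x i} p₀) := by
  classical
  have hweight (i : Fin n) (b : Bool) :
      (bern (if x i then p₁ else p₀)).real {b} = bernoulliWeight (if x i then p₁ else p₀) b := by
    split_ifs <;> exact bern_real_singleton (by assumption) (by assumption) b
  have himprove (f : Fin n → Bool) :
      ones x < ones (fun i => xor (f i) (x i)) ↔ #{i | x i ∧ f i} < #{i | ¬ x i ∧ f i} := by
    have := ones_xor_add x f; omega
  rw [improveProb, mutation, ← measureReal_def, map_measureReal_apply .of_discrete .of_discrete,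
    measureReal_pi_eq_sum, sum_filter]
  refine (sum_congr rfl fun f _ => ?_).trans
    (sum_prod_bernoulliWeight_split (fun i => x i = true) p₀ p₁ fun b a => if b < a then 1 else 0)
  simp [hweight, himprove]

theorem stmt0_general {n : ℕ} (x : Fin n → Bool)
    (hz : 1 ≤ zeros x) (ho : 1 ≤ ones x)
    (r₀ r₁ β : ℝ) (hr₀ : 0 ≤ r₀) (hr₁ : 0 ≤ r₁) (hsum : r₀ + r₁ = 1)
    (hβ₀ : 0 ≤ β) (hβ : β ≤ r₁) :
    improveProb x (r₀ / zeros x) (r₁ / ones x) + r₁ * r₀ * (1 - Real.exp (-β))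
      ≤ improveProb x ((r₀ + β) / zeros x) ((r₁ - β) / ones x) := by
  have hz' : (1 : ℝ) ≤ zeros x := by exact_mod_cast hz
  have ho' : (1 : ℝ) ≤ ones x := by exact_mod_cast ho
  have hp₀0 : 0 ≤ r₀ / zeros x := by positivity
  have hp₀ : r₀ / zeros x ≤ (r₀ + β) / zeros x := by gcongr; linarith
  have hp₀' : (r₀ + β) / zeros x ≤ 1 := div_le_one_of_le₀ (by linarith) (by positivity)
  have hp₁' : 0 ≤ (r₁ - β) / ones x := div_nonneg (by linarith) (by positivity)
  have hp₁ : (r₁ - β) / ones x ≤ r₁ / ones x := by gcongr; linarith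
  have hp₁1 : r₁ / ones x ≤ 1 := div_le_one_of_le₀ (by linarith) (by positivity)
  have hcard₁ : Fintype.card {i // x i} = ones x := Fintype.card_subtype _
  have hcard₀ : Fintype.card {i // ¬ x i} = zeros x := by simp [Fintype.card_subtype, zeros]
  have hgap := binomialExpectation_binomialTail_add_le (κ := {i // x i}) (ι := {i // ¬ x i})
    hp₀0 hp₀ hp₀' hp₁' hp₁ hp₁1
  rw [hcard₀, hcard₁] at hgap
  rw [improveProb_eq x hp₀0 (hp₀.trans hp₀') (hp₁'.trans hp₁) hp₁1,
    improveProb_eq x (hp₀0.trans hp₀) hp₀' hp₁' (hp₁.trans hp₁1)]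
  linarith [mul_mul_one_sub_exp_neg_le (by omega : zeros x ≠ 0) (by omega : ones x ≠ 0)
    hr₀ hr₁ hsum hβ₀ hβ]

theorem stmt0 {n : ℕ} (hn : 1 ≤ n) (x : Fin n → Bool)
    (hz : 1 ≤ zeros x) (ho : 1 ≤ ones x)
    (r₀ r₁ β : ℝ) (hr₀ : 0 ≤ r₀) (hr₁ : 0 ≤ r₁) (hsum : r₀ + r₁ = 1)
    (hβ₀ : 0 ≤ β) (hβ : β ≤ r₁) :
    improveProb x (r₀ / zeros x) (r₁ / ones x) + r₁ * r₀ * (1 - Real.exp (-β))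
      ≤ improveProb x ((r₀ + β) / zeros x) ((r₁ - β) / ones x) :=
  stmt0_general x hz ho r₀ r₁ β hr₀ hr₁ hsum hβ₀ hβ
end

section
/- Let n ≥ 1 and let x ∈ {0,1}^n be a fixed search point with z := |x|₀ ≥ 1 zero-bits and o := |x|₁ ≥ 1 one-bits. Let p₀ ∈ [0,1] and let 0 ≤ p₁' ≤ p₁ ≤ 1. Then for the fitness function OneMax, P[S_{(p₀,p₁')}] ≥ P[S_{(p₀,p₁)}]; i.e., decreasing the flip probability of one-bits while keeping the flip probability of zero-bits fixed does not decrease the probability of a strict improvement. -/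
open MeasureTheory

/-! Written in terms of the offspring `y`, asymmetric mutation is the product of independent
Bernoulli coordinates: `y i = 1` with probability `p₀` if `x i = 0` and `1 - p₁` if `x i = 1`.
The improvement event `OneMax y > OneMax x` is an upper set of `{0,1}ⁿ`, and the probability of an
upper set under a product of Bernoulli measures increases with every coordinate parameter:
conditioning on the first coordinate writes it as `r ν(A₁) + (1 - r) ν(A₀)` with sections
`A₀ ⊆ A₁`, and induction on `n` does the rest. Lowering `p₁` raises `1 - p₁`. -/

instance inst_s1 (p : ℝ) : IsFiniteMeasure (bern p) := ⟨by simp [bern]⟩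

theorem lintegral_bern (p : ℝ) (f : Bool → ENNReal) :
    ∫⁻ b, f b ∂bern p = ENNReal.ofReal p * f true + ENNReal.ofReal (1 - p) * f false := by
  simp [bern, lintegral_add_measure, lintegral_smul_measure]

theorem map_not_bern (p : ℝ) : (bern p).map not = bern (1 - p) := by
  have h : Measurable not := measurable_of_countable _
  rw [bern, bern, Measure.map_add _ _ h, Measure.map_smul, Measure.map_smul]
  simp [add_comm]

theorem pi_bern_apply_eq_add {n : ℕ} (r : Fin (n + 1) → ℝ) (A : Set (Fin (n + 1) → Bool)) :
    Measure.pi (fun i => bern (r i)) A =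
      ENNReal.ofReal (r 0) * Measure.pi (fun i => bern (r i.succ)) {g | Fin.cons true g ∈ A} +
      ENNReal.ofReal (1 - r 0) *
        Measure.pi (fun i => bern (r i.succ)) {g | Fin.cons false g ∈ A} := by
  have e := (measurePreserving_piFinSuccAbove (fun i => bern (r i)) 0).symm
  rw [← e.measure_preimage_equiv, Measure.prod_apply (Set.toFinite _).measurableSet,
    lintegral_bern]
  simp only [Fin.zero_succAbove, MeasurableEquiv.piFinSuccAbove_symm_apply, Fin.insertNthEquiv_zero]
  rfl

theorem ENNReal.ofReal_mul_add_ofReal_one_sub_mul_le {a b : ENNReal} {r r' : ℝ} (hab : a ≤ b)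
    (hr : 0 ≤ r) (hrr' : r ≤ r') :
    ENNReal.ofReal r * b + ENNReal.ofReal (1 - r) * a ≤
      ENNReal.ofReal r' * b + ENNReal.ofReal (1 - r') * a := by
  have h₁ : ENNReal.ofReal r' = ENNReal.ofReal r + ENNReal.ofReal (r' - r) := by
    rw [← ENNReal.ofReal_add hr (sub_nonneg.2 hrr'), add_sub_cancel]
  have h₂ : ENNReal.ofReal (1 - r) ≤ ENNReal.ofReal (1 - r') + ENNReal.ofReal (r' - r) := by
    rw [← sub_add_sub_cancel 1 r' r]
    exact ENNReal.ofReal_add_le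
  calc ENNReal.ofReal r * b + ENNReal.ofReal (1 - r) * a
      ≤ ENNReal.ofReal r * b + (ENNReal.ofReal (1 - r') + ENNReal.ofReal (r' - r)) * a := by
        gcongr
    _ ≤ ENNReal.ofReal r * b + (ENNReal.ofReal (1 - r') * a + ENNReal.ofReal (r' - r) * b) := by
        rw [add_mul]
        gcongr
    _ = ENNReal.ofReal r' * b + ENNReal.ofReal (1 - r') * a := by rw [h₁]; ring

theorem pi_bern_mono_of_isUpperSet {n : ℕ} {r r' : Fin n → ℝ} {A : Set (Fin n → Bool)}
    (hA : IsUpperSet A) (hr : ∀ i, 0 ≤ r i) (hrr' : ∀ i, r i ≤ r' i) :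
    Measure.pi (fun i => bern (r i)) A ≤ Measure.pi (fun i => bern (r' i)) A := by
  induction n with
  | zero => obtain rfl := Subsingleton.elim r r'; rfl
  | succ n ih =>
    have hsection (b : Bool) : IsUpperSet {g : Fin n → Bool | Fin.cons b g ∈ A} :=
      fun g g' hgg' hg => hA (Fin.cons_le_cons.2 ⟨le_rfl, hgg'⟩) hg
    have hfalse_true :
        {g : Fin n → Bool | Fin.cons false g ∈ A} ⊆ {g | Fin.cons true g ∈ A} :=
      fun g hg => hA (Fin.cons_le_cons.2 ⟨Bool.false_le _, le_rfl⟩) hg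
    set ν' := Measure.pi fun i : Fin n => bern (r' i.succ)
    rw [pi_bern_apply_eq_add, pi_bern_apply_eq_add]
    calc _ ≤ ENNReal.ofReal (r 0) * ν' {g | Fin.cons true g ∈ A} +
          ENNReal.ofReal (1 - r 0) * ν' {g | Fin.cons false g ∈ A} := by
          gcongr ENNReal.ofReal _ * ?_ + ENNReal.ofReal _ * ?_ <;>
            exact ih (hsection _) (fun i => hr _) (fun i => hrr' _)
      _ ≤ _ := ENNReal.ofReal_mul_add_ofReal_one_sub_mul_le (measure_mono hfalse_true) (hr 0)
          (hrr' 0)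

theorem ones_mono {n : ℕ} : Monotone (ones (n := n)) := fun y y' h =>
  Finset.card_le_card fun i hi => by
    simp only [Finset.mem_filter, Finset.mem_univ, true_and] at hi ⊢
    exact h i hi

theorem mutation_eq_pi_bern {n : ℕ} (x : Fin n → Bool) (p₀ p₁ : ℝ) :
    mutation x p₀ p₁ = Measure.pi fun i => bern (if x i then 1 - p₁ else p₀) := by
  rw [mutation, Measure.pi_map_pi (f := fun i b => xor b (x i))
    fun i => (measurable_of_countable _).aemeasurable]
  congr with i : 1
  cases x i
  · simp
  · simpa using map_not_bern p₁

theorem stmt1_general {n : ℕ} (x : Fin n → Bool)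
    (p₀ p₁ p₁' : ℝ) (hp₀0 : 0 ≤ p₀)
    (hle : p₁' ≤ p₁) (hp₁1 : p₁ ≤ 1) :
    improveProb x p₀ p₁ ≤ improveProb x p₀ p₁' := by
  rw [improveProb, improveProb, mutation_eq_pi_bern, mutation_eq_pi_bern]
  refine ENNReal.toReal_mono (measure_ne_top _ _)
    (pi_bern_mono_of_isUpperSet ((isUpperSet_Ioi (ones x)).preimage ones_mono) (fun i => ?_)
      (fun i => ?_)) <;> split_ifs <;> linarith

theorem stmt1 {n : ℕ} (hn : 1 ≤ n) (x : Fin n → Bool)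
    (hz : 1 ≤ zeros x) (ho : 1 ≤ ones x)
    (p₀ p₁ p₁' : ℝ) (hp₀0 : 0 ≤ p₀) (hp₀1 : p₀ ≤ 1)
    (hp₁'0 : 0 ≤ p₁') (hle : p₁' ≤ p₁) (hp₁1 : p₁ ≤ 1) :
    improveProb x p₀ p₁ ≤ improveProb x p₀ p₁' :=
  stmt1_general x p₀ p₁ p₁' hp₀0 hle hp₁1
end

section
/- Let n ≥ 2, let α ∈ (0,1/2), and let x ∈ {0,1}^n be a fixed search point with z := |x|₀ ≥ 1 zero-bits and o := |x|₁ ≥ 1 one-bits. Let y be created from x by asymmetric mutation with pair ((1−2α)/z, 2α/o). Then the expected elitist fitness gain on OneMax satisfies E[max{OneMax(y) − OneMax(x), 0}] ≥ (1−2α)·(1 − 2α/o)^o ≥ (1−2α)² ≥ 1 − 4α. -/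
open MeasureTheory

/-!
Write the offspring as `y = φ xor x`, where `φ` is the vector of independent flips. If `φ` flips
no one-bit of `x`, the gain is the number of flipped zero-bits, i.e. the sum over the zero-bits
`i` of the indicators of the boxes `{φ i = 1, φ j = 0 for every one-bit j}`; otherwise the gain is
`≥ 0`. Under the product measure each box has probability `p₀ (1 - p₁) ^ o`, so the expected gain
is at least `z p₀ (1 - p₁) ^ o`, which is `(1 - 2α) (1 - 2α/o) ^ o` for the given rates. The other
two inequalities are Bernoulli's inequality and `(1 - 2α) ^ 2 = 1 - 4α + 4α ^ 2`.
-/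

open Finset

lemma isProbabilityMeasure_bern {p : ℝ} (hp : p ∈ Set.Icc 0 1) :
    IsProbabilityMeasure (bern p) :=
  ⟨by simp [bern, ← ENNReal.ofReal_add hp.1 (sub_nonneg.2 hp.2)]⟩

lemma bern_real_true {p : ℝ} (hp : 0 ≤ p) : (bern p).real {true} = p := by
  simp [bern, Measure.real, hp]

lemma bern_real_false {p : ℝ} (hp : p ≤ 1) : (bern p).real {false} = 1 - p := by
  simp [bern, Measure.real, hp]

lemma isProbabilityMeasure_bern_ite (b : Bool) {p₀ p₁ : ℝ} (hp₀ : p₀ ∈ Set.Icc 0 1)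
    (hp₁ : p₁ ∈ Set.Icc 0 1) : IsProbabilityMeasure (bern (if b then p₁ else p₀)) := by
  cases b
  exacts [isProbabilityMeasure_bern hp₀, isProbabilityMeasure_bern hp₁]

lemma ones_xor_add_card {n : ℕ} (φ x : Fin n → Bool) :
    ones (fun j => xor (φ j) (x j)) + #{j | x j = true ∧ φ j = true}
      = ones x + #{j | x j = false ∧ φ j = true} := by
  simp only [ones, card_filter, ← sum_add_distrib]
  refine sum_congr rfl fun j _ => ?_
  cases φ j <;> cases x j <;> rfl

def flipsZeroBitKeepingOnes {n : ℕ} (x : Fin n → Bool) (i : Fin n) : Set (Fin n → Bool) :=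
  {φ | φ i = true ∧ ∀ j, x j = true → φ j = false}

lemma sum_indicator_flipsZeroBitKeepingOnes_le {n : ℕ} (x φ : Fin n → Bool) :
    ∑ i with x i = false, (flipsZeroBitKeepingOnes x i).indicator 1 φ
      ≤ max ((ones (fun j => xor (φ j) (x j)) : ℝ) - ones x) 0 := by
  by_cases hkeep : ∀ j, x j = true → φ j = false
  · have hnone : #{j | x j = true ∧ φ j = true} = 0 := by
      simp only [card_eq_zero, filter_eq_empty_iff]
      exact fun j _ ⟨hxj, hφj⟩ => by simp [hkeep j hxj] at hφj
    have hgain : (ones (fun j => xor (φ j) (x j)) : ℝ)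
        = ones x + #{j | x j = false ∧ φ j = true} := by
      exact_mod_cast hnone ▸ ones_xor_add_card φ x
    have hsum : ∑ i with x i = false, (flipsZeroBitKeepingOnes x i).indicator 1 φ
        = (#{j | x j = false ∧ φ j = true} : ℝ) := by
      have hmem : ∀ i, φ ∈ flipsZeroBitKeepingOnes x i ↔ φ i = true := fun i => and_iff_left hkeep
      have hterm : ∀ i, (flipsZeroBitKeepingOnes x i).indicator 1 φ
          = if φ i = true then (1 : ℝ) else 0 := fun i => by
        split_ifs with hφi
        exacts [Set.indicator_of_mem ((hmem i).2 hφi) _,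
          Set.indicator_of_notMem (mt (hmem i).1 hφi) _]
      rw [sum_congr rfl fun i _ => hterm i, sum_boole, filter_filter]
    exact le_max_of_le_left (by rw [hsum, hgain]; linarith)
  · push Not at hkeep
    obtain ⟨j, hxj, hφj⟩ := hkeep
    refine le_of_eq_of_le (sum_eq_zero fun i _ => Set.indicator_of_notMem ?_ _) (le_max_right _ _)
    exact fun hφ => hφj (hφ.2 j hxj)

lemma pi_bern_real_flipsZeroBitKeepingOnes {n : ℕ} {x : Fin n → Bool} {i : Fin n}
    (hi : x i = false) {p₀ p₁ : ℝ} (hp₀ : p₀ ∈ Set.Icc 0 1) (hp₁ : p₁ ∈ Set.Icc 0 1) :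
    (Measure.pi fun j => bern (if x j then p₁ else p₀)).real (flipsZeroBitKeepingOnes x i)
      = p₀ * (1 - p₁) ^ ones x := by
  have hpi : flipsZeroBitKeepingOnes x i
      = Set.univ.pi fun j => if j = i then {true} else if x j then {false} else Set.univ := by
    ext φ
    simp only [flipsZeroBitKeepingOnes, Set.mem_univ_pi]
    refine ⟨fun ⟨hφi, hkeep⟩ j => ?_, fun h => ⟨by simpa using h i, fun j hxj => ?_⟩⟩
    · by_cases hji : j = i
      · simp [hji, hφi]
      · cases hxj : x j <;> simp [hji, hxj, hkeep j]
    · have hji : j ≠ i := by rintro rfl; simp [hi] at hxj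
      simpa [hji, hxj] using h j
  have hfactor : ∀ j, (bern (if x j then p₁ else p₀)).real
      (if j = i then {true} else if x j then {false} else Set.univ)
      = (if j = i then p₀ else 1) * (if x j then 1 - p₁ else 1) := by
    intro j
    by_cases hji : j = i
    · subst hji; simp [hi, bern_real_true hp₀.1]
    · cases hxj : x j
      · have := isProbabilityMeasure_bern hp₀
        simp only [hji, if_false, Bool.false_eq_true, probReal_univ, mul_one]
      · simp [hji, bern_real_false hp₁.2]
  have := fun j => isProbabilityMeasure_bern_ite (x j) hp₀ hp₁
  rw [hpi, Measure.real, Measure.pi_pi, ENNReal.toReal_prod]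
  simp only [← Measure.real_def, hfactor, prod_mul_distrib, prod_ite_eq', mem_univ, if_true,
    ← prod_filter, prod_const, ones]

theorem zeros_mul_mul_pow_le_integral_max_ones_sub {n : ℕ} (x : Fin n → Bool) {p₀ p₁ : ℝ}
    (hp₀ : p₀ ∈ Set.Icc 0 1) (hp₁ : p₁ ∈ Set.Icc 0 1) :
    zeros x * p₀ * (1 - p₁) ^ ones x
      ≤ ∫ y, max ((ones y : ℝ) - ones x) 0 ∂mutation x p₀ p₁ := by
  have := fun j => isProbabilityMeasure_bern_ite (x j) hp₀ hp₁
  set μ := Measure.pi fun j => bern (if x j then p₁ else p₀)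
  rw [mutation, integral_map Measurable.of_discrete.aemeasurable
    Measurable.of_discrete.aestronglyMeasurable]
  calc zeros x * p₀ * (1 - p₁) ^ ones x
      = ∑ i with x i = false, μ.real (flipsZeroBitKeepingOnes x i) := by
        rw [sum_congr rfl fun i hi =>
            pi_bern_real_flipsZeroBitKeepingOnes (mem_filter.1 hi).2 hp₀ hp₁,
          sum_const, nsmul_eq_mul, zeros, mul_assoc]
    _ = ∫ φ, ∑ i with x i = false, (flipsZeroBitKeepingOnes x i).indicator 1 φ ∂μ := by
        rw [integral_finsetSum _ fun i _ => Integrable.of_finite]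
        simp only [integral_indicator_one MeasurableSet.of_discrete]
    _ ≤ _ := integral_mono Integrable.of_finite Integrable.of_finite
        (sum_indicator_flipsZeroBitKeepingOnes_le x)

lemma one_sub_le_one_sub_div_pow_s10 {c : ℝ} (hc₀ : 0 ≤ c) (hc₂ : c ≤ 2) (m : ℕ) :
    1 - c ≤ (1 - c / m) ^ m := by
  rcases Nat.eq_zero_or_pos m with rfl | hm
  · simpa using hc₀
  · calc 1 - c = 1 + m * -(c / m) := by field_simp; ring
      _ ≤ (1 + -(c / m)) ^ m :=
        one_add_mul_le_pow (by linarith [div_nat_le_self_of_nonnneg hc₀ m]) m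
      _ = (1 - c / m) ^ m := by ring

theorem stmt10_general {n : ℕ} (α : ℝ) (hα : α ∈ Set.Ioo (0 : ℝ) (1 / 2))
    (x : Fin n → Bool) (hz : 1 ≤ zeros x) :
    ((1 - 2 * α) * (1 - 2 * α / ones x) ^ (ones x)
        ≤ ∫ y, max ((ones y : ℝ) - (ones x : ℝ)) 0
            ∂(mutation x ((1 - 2 * α) / zeros x) (2 * α / ones x)))
    ∧ ((1 - 2 * α) ^ 2 ≤ (1 - 2 * α) * (1 - 2 * α / ones x) ^ (ones x))
    ∧ (1 - 4 * α ≤ (1 - 2 * α) ^ 2) := by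
  obtain ⟨hα₀, hα₁⟩ := hα
  have hz' : (1 : ℝ) ≤ zeros x := by exact_mod_cast hz
  have hp₀ : (1 - 2 * α) / zeros x ∈ Set.Icc 0 1 :=
    ⟨div_nonneg (by linarith) (by positivity),
      by linarith [div_le_self (by linarith : 0 ≤ 1 - 2 * α) hz']⟩
  have hp₁ : 2 * α / ones x ∈ Set.Icc 0 1 :=
    ⟨by positivity, by linarith [div_nat_le_self_of_nonnneg (by linarith : 0 ≤ 2 * α) (ones x)]⟩
  refine ⟨?_, ?_, by nlinarith⟩
  · convert zeros_mul_mul_pow_le_integral_max_ones_sub x hp₀ hp₁ using 2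
    field_simp
  · rw [sq]
    exact mul_le_mul_of_nonneg_left (one_sub_le_one_sub_div_pow_s10 (by linarith) (by linarith) _)
      (by linarith)

theorem stmt10 {n : ℕ} (hn : 2 ≤ n) (α : ℝ) (hα : α ∈ Set.Ioo (0 : ℝ) (1 / 2))
    (x : Fin n → Bool) (hz : 1 ≤ zeros x) (ho : 1 ≤ ones x) :
    ((1 - 2 * α) * (1 - 2 * α / ones x) ^ (ones x)
        ≤ ∫ y, max ((ones y : ℝ) - (ones x : ℝ)) 0
            ∂(mutation x ((1 - 2 * α) / zeros x) (2 * α / ones x)))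
    ∧ ((1 - 2 * α) ^ 2 ≤ (1 - 2 * α) * (1 - 2 * α / ones x) ^ (ones x))
    ∧ (1 - 4 * α ≤ (1 - 2 * α) ^ 2) :=
  stmt10_general α hα x hz
end

section
/- Let n ≥ 1, let 1 ≤ z ≤ n, let a = 0^z 1^{n−z} ∈ {0,1}^n (z zeros followed by n−z ones), and let x ∈ {0,1}^n with h := H(x,a) ≥ 2z. Then the number of positions i > z with x_i = 0 (zero-bits of x whose flip strictly increases OneMax_a) is at least h − z ≥ h/2, and the total number of zero-bits of x satisfies |x|₀ ≤ h + z ≤ (3/2)·h. -/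
open Finset

lemma card_filter_le_card_filter_le_and_add {n : ℕ} (z : ℕ) (q : Fin n → Prop)
    [DecidablePred q] : #{i | q i} ≤ #{i : Fin n | z ≤ (i : ℕ) ∧ q i} + z := by
  have hsplit := card_filter_add_card_filter_not (s := ({i | q i} : Finset (Fin n)))
    fun i : Fin n => z ≤ (i : ℕ)
  have hprefix : #{i : Fin n | q i ∧ ¬z ≤ (i : ℕ)} ≤ z :=
    calc #{i : Fin n | q i ∧ ¬z ≤ (i : ℕ)}
        ≤ #{i : Fin n | (i : ℕ) < z} := card_le_card fun i => by simp +contextual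
      _ ≤ z := Fin.card_filter_val_lt.trans_le (min_le_right _ _)
  simp only [filter_filter] at hsplit
  rw [filter_congr (p := fun i : Fin n => z ≤ (i : ℕ) ∧ q i) (q := fun i => q i ∧ z ≤ (i : ℕ))
    fun _ _ => and_comm]
  omega

section PrefixZerosSuffixOnes

variable {n z : ℕ} {a : Fin n → Bool} (ha : ∀ i : Fin n, a i = decide (z ≤ (i : ℕ)))
  (x : Fin n → Bool)
include ha

lemma ne_iff_eq_false_of_le {i : Fin n} (hi : z ≤ (i : ℕ)) : x i ≠ a i ↔ x i = false := by
  simp [ha i, hi]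

lemma hammingDist_le_card_suffix_zeros_add :
    hammingDist x a ≤ #{i : Fin n | z ≤ (i : ℕ) ∧ x i = false} + z := by
  refine (card_filter_le_card_filter_le_and_add z fun i => x i ≠ a i).trans_eq ?_
  congr 2
  exact filter_congr fun i _ => and_congr_right (ne_iff_eq_false_of_le ha x)

lemma zeros_le_hammingDist_add : zeros x ≤ hammingDist x a + z := by
  refine (card_filter_le_card_filter_le_and_add z fun i => x i = false).trans <|
    Nat.add_le_add_right (card_le_card fun i => ?_) z
  simp only [mem_filter, mem_univ, true_and]
  exact fun hi => (ne_iff_eq_false_of_le ha x hi.1).2 hi.2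

end PrefixZerosSuffixOnes

theorem stmt16_general (n : ℕ) (z : ℕ)
    (a : Fin n → Bool) (ha : ∀ i : Fin n, a i = decide (z ≤ (i : ℕ)))
    (x : Fin n → Bool) (h2z : 2 * z ≤ hammingDist x a) :
    ((hammingDist x a : ℝ) - z
        ≤ ((Finset.univ.filter fun i : Fin n => z ≤ (i : ℕ) ∧ x i = false).card : ℝ))
    ∧ ((hammingDist x a : ℝ) / 2 ≤ (hammingDist x a : ℝ) - z)
    ∧ ((zeros x : ℝ) ≤ (hammingDist x a : ℝ) + z)
    ∧ ((hammingDist x a : ℝ) + z ≤ 3 / 2 * (hammingDist x a : ℝ)) := by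
  have hsuffix : (hammingDist x a : ℝ) ≤ #{i : Fin n | z ≤ (i : ℕ) ∧ x i = false} + z := by
    exact_mod_cast hammingDist_le_card_suffix_zeros_add ha x
  have hzeros : (zeros x : ℝ) ≤ hammingDist x a + z := by
    exact_mod_cast zeros_le_hammingDist_add ha x
  have h2z' : (2 * z : ℝ) ≤ hammingDist x a := by exact_mod_cast h2z
  exact ⟨by linarith, by linarith, hzeros, by linarith⟩

theorem stmt16 (n : ℕ) (hn : 1 ≤ n) (z : ℕ) (hz1 : 1 ≤ z) (hzn : z ≤ n)
    (a : Fin n → Bool) (ha : ∀ i : Fin n, a i = decide (z ≤ (i : ℕ)))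
    (x : Fin n → Bool) (h2z : 2 * z ≤ hammingDist x a) :
    ((hammingDist x a : ℝ) - z
        ≤ ((Finset.univ.filter fun i : Fin n => z ≤ (i : ℕ) ∧ x i = false).card : ℝ))
    ∧ ((hammingDist x a : ℝ) / 2 ≤ (hammingDist x a : ℝ) - z)
    ∧ ((zeros x : ℝ) ≤ (hammingDist x a : ℝ) + z)
    ∧ ((hammingDist x a : ℝ) + z ≤ 3 / 2 * (hammingDist x a : ℝ)) :=
  stmt16_general n z a ha x h2z
end
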